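/- Let α, β, γ > 0, let μ₁ be the Gamma distribution with shape α and rate γ and μ₂ the Gamma distribution with shape β and rate γ. Then the pushforward of μ₁ ⊗ μ₂ under the map (x₁, x₂) ↦ x₁/(x₁ + x₂) is the Beta(α, β) distribution on ℝ, i.e., the measure with density Γ(α+β)/(Γ(α)·Γ(β)) · t^(α−1) · (1−t)^(β−1) for 0 < t < 1 and 0 otherwise, with respect to Lebesgue measure. -/

import Mathlib

open MeasureTheory

/-- The Gamma(a, r) density (shape `a`, rate `r`): `r^a/Γ(a) · x^(a-1) · exp(-r·x)` for `x > 0`,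
and `0` otherwise. -/
noncomputable def gammaPdf (a r x : ℝ) : ℝ :=
  if 0 < x then r ^ a / Real.Gamma a * x ^ (a - 1) * Real.exp (-(r * x)) else 0

/-- The Beta(a, b) density: `Γ(a+b)/(Γ(a)Γ(b)) · t^(a-1) · (1-t)^(b-1)` for `0 < t < 1`,
and `0` otherwise. -/
noncomputable def betaPdf (a b t : ℝ) : ℝ :=
  if 0 < t ∧ t < 1 then
    Real.Gamma (a + b) / (Real.Gamma a * Real.Gamma b) * t ^ (a - 1) * (1 - t) ^ (b - 1)
  else 0

section Aux

open Set Real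
open scoped ENNReal

noncomputable def Tmap : ℝ × ℝ → ℝ × ℝ := fun p => (p.1 * p.2, (1 - p.1) * p.2)

noncomputable def Tder (p : ℝ × ℝ) : ℝ × ℝ →L[ℝ] ℝ × ℝ :=
  LinearMap.toContinuousLinearMap (Matrix.toLin (Module.Basis.finTwoProd ℝ) (Module.Basis.finTwoProd ℝ)
    !![p.2, p.1; -p.2, 1 - p.1])

theorem hasFDerivAt_Tmap (p : ℝ × ℝ) : HasFDerivAt Tmap (Tder p) p := by
  unfold Tmap Tder
  rw [Matrix.toLin_finTwoProd_toContinuousLinearMap]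
  convert HasFDerivAt.prodMk (𝕜 := ℝ)
    (hasFDerivAt_fst.mul hasFDerivAt_snd : HasFDerivAt (fun q : ℝ × ℝ => q.1 * q.2) _ p)
    (((hasFDerivAt_const (1:ℝ) p).sub hasFDerivAt_fst).mul hasFDerivAt_snd :
      HasFDerivAt (fun q : ℝ × ℝ => (1 - q.1) * q.2) _ p) using 2 <;>
  · ext q <;> simp

theorem Tder_det (p : ℝ × ℝ) : (Tder p).det = p.2 := by
  simp only [Tder, LinearMap.det_toContinuousLinearMap, LinearMap.det_toLin,
    Matrix.det_fin_two_of]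
  ring

theorem Tmap_injOn : InjOn Tmap (Ioo (0:ℝ) 1 ×ˢ Ioi (0:ℝ)) := by
  rintro ⟨t₁, s₁⟩ ⟨ht₁, hs₁⟩ ⟨t₂, s₂⟩ ⟨ht₂, hs₂⟩ h
  simp only [Tmap, Prod.mk.injEq] at h
  have hs : s₁ = s₂ := by nlinarith [h.1, h.2]
  subst hs
  have : t₁ = t₂ := by
    have := h.1
    exact mul_right_cancel₀ (ne_of_gt (mem_Ioi.mp hs₁)) this
  simp [this]

theorem Tmap_image : Tmap '' (Ioo (0:ℝ) 1 ×ˢ Ioi (0:ℝ)) = Ioi (0:ℝ) ×ˢ Ioi (0:ℝ) := by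
  ext ⟨x, y⟩
  simp only [mem_image, mem_prod, mem_Ioo, mem_Ioi, Prod.exists]
  constructor
  · rintro ⟨t, s, ⟨⟨ht0, ht1⟩, hs⟩, h⟩
    simp only [Tmap, Prod.mk.injEq] at h
    constructor
    · rw [← h.1]; positivity
    · rw [← h.2]; nlinarith
  · rintro ⟨hx, hy⟩
    refine ⟨x / (x + y), x + y, ⟨⟨by positivity, ?_⟩, by positivity⟩, ?_⟩
    · rw [div_lt_one (by positivity)]; linarith
    · simp only [Tmap, Prod.mk.injEq]
      constructor
      · field_simp
      · field_simp
        ring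

theorem gammaPdf_nonneg {a r : ℝ} (ha : 0 < a) (hr : 0 < r) (x : ℝ) : 0 ≤ gammaPdf a r x := by
  unfold gammaPdf
  split_ifs with h
  · positivity
  · exact le_rfl

theorem measurable_gammaPdf (a r : ℝ) : Measurable (gammaPdf a r) := by
  unfold gammaPdf
  exact Measurable.ite measurableSet_Ioi
    (((measurable_id'.pow_const _).const_mul _).mul
      (measurable_id'.const_mul _).neg.exp) measurable_const

theorem prod_withDensity (f g : ℝ → ℝ≥0∞) (hf : Measurable f) (hg : Measurable g)
    [SigmaFinite (volume.withDensity f)] [SigmaFinite (volume.withDensity g)] :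
    (volume.withDensity f).prod (volume.withDensity g)
      = ((volume : Measure ℝ).prod volume).withDensity (fun p => f p.1 * g p.2) := by
  refine Measure.prod_eq fun s t hs ht => ?_
  rw [withDensity_apply _ (hs.prod ht), ← Measure.prod_restrict,
    lintegral_prod_mul (hf.aemeasurable) (hg.aemeasurable),
    withDensity_apply _ hs, withDensity_apply _ ht]

end Aux

section Aux2
open Set Real
open scoped ENNReal

theorem lintegral_rpow_mul_exp (a r : ℝ) (ha : 0 < a) (hr : 0 < r) :
    ∫⁻ u in Ioi (0:ℝ), ENNReal.ofReal (u ^ (a - 1) * exp (-(r * u)))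
      = ENNReal.ofReal ((1 / r) ^ a * Gamma a) := by
  rw [← integral_rpow_mul_exp_neg_mul_Ioi ha hr,
    ofReal_integral_eq_lintegral_ofReal]
  · refine (integrableOn_rpow_mul_exp_neg_mul_rpow (s := a - 1) (p := 1)
      (by linarith) zero_lt_one hr).congr_fun (fun x hx => ?_) measurableSet_Ioi
    simp only [rpow_one, neg_mul]
  · filter_upwards [self_mem_ae_restrict measurableSet_Ioi] with x hx
    have : (0:ℝ) < x := hx
    positivity

theorem inner_integral (α β γ : ℝ) (hα : 0 < α) (hβ : 0 < β) (hγ : 0 < γ) {t : ℝ}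
    (ht : t ∈ Ioo (0:ℝ) 1) :
    ∫⁻ u in Ioi (0:ℝ), ENNReal.ofReal (u * (gammaPdf α γ (t * u) * gammaPdf β γ ((1 - t) * u)))
      = ENNReal.ofReal (betaPdf α β t) := by
  obtain ⟨ht0, ht1⟩ := ht
  have ht1' : (0:ℝ) < 1 - t := by linarith
  have key : ∀ u ∈ Ioi (0:ℝ),
      ENNReal.ofReal (u * (gammaPdf α γ (t * u) * gammaPdf β γ ((1 - t) * u)))
      = ENNReal.ofReal (γ ^ (α + β) / (Gamma α * Gamma β) * (t ^ (α - 1) * (1 - t) ^ (β - 1)))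
        * ENNReal.ofReal (u ^ (α + β - 1) * exp (-(γ * u))) := by
    intro u hu
    have hu : (0:ℝ) < u := hu
    rw [← ENNReal.ofReal_mul (by positivity)]
    congr 1
    rw [gammaPdf, if_pos (by positivity), gammaPdf, if_pos (by positivity),
      mul_rpow ht0.le hu.le, mul_rpow ht1'.le hu.le,
      show α + β - 1 = (α - 1) + (β - 1) + 1 by ring, rpow_add hu, rpow_add hu, rpow_one,
      rpow_add hγ,
      show -(γ * u) = -(γ * (t * u)) + -(γ * ((1 - t) * u)) by ring, Real.exp_add]
    ring
  rw [setLIntegral_congr_fun measurableSet_Ioi key,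
    lintegral_const_mul _ (by
      apply Measurable.ennreal_ofReal
      exact (measurable_id'.pow_const _).mul (measurable_id'.const_mul _).neg.exp),
    lintegral_rpow_mul_exp _ _ (by linarith) hγ,
    ← ENNReal.ofReal_mul (by positivity)]
  congr 1
  have hne : Gamma α ≠ 0 := (Gamma_pos_of_pos hα).ne'
  have hne2 : Gamma β ≠ 0 := (Gamma_pos_of_pos hβ).ne'
  have hne3 : γ ^ (α + β) ≠ 0 := (rpow_pos_of_pos hγ _).ne'
  rw [betaPdf, if_pos ⟨ht0, ht1⟩, div_rpow zero_le_one hγ.le, one_rpow]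
  field_simp

end Aux2

open Set Real
open scoped ENNReal

/-- The pushforward of `Gamma(α,γ) ⊗ Gamma(β,γ)` under `(x₁,x₂) ↦ x₁/(x₁+x₂)` is the
Beta(α, β) distribution. -/
theorem map_div_add_gamma_eq_beta (α β γ : ℝ) (hα : 0 < α) (hβ : 0 < β) (hγ : 0 < γ)
    (μ₁ μ₂ : Measure ℝ)
    (hμ₁ : μ₁ = volume.withDensity fun x => ENNReal.ofReal (gammaPdf α γ x))
    (hμ₂ : μ₂ = volume.withDensity fun x => ENNReal.ofReal (gammaPdf β γ x)) :
    Measure.map (fun p : ℝ × ℝ => p.1 / (p.1 + p.2)) (μ₁.prod μ₂)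
      = (volume : Measure ℝ).withDensity fun t => ENNReal.ofReal (betaPdf α β t) := by
  have hf : Measurable (fun p : ℝ × ℝ => p.1 / (p.1 + p.2)) :=
    measurable_fst.div (measurable_fst.add measurable_snd)
  have hσ1 : SigmaFinite (volume.withDensity fun x => ENNReal.ofReal (gammaPdf α γ x)) :=
    SigmaFinite.withDensity_of_ne_top' fun x => ENNReal.ofReal_ne_top
  have hσ2 : SigmaFinite (volume.withDensity fun x => ENNReal.ofReal (gammaPdf β γ x)) :=
    SigmaFinite.withDensity_of_ne_top' fun x => ENNReal.ofReal_ne_top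
  set f : ℝ × ℝ → ℝ := fun p => p.1 / (p.1 + p.2) with hfdef
  set d : ℝ × ℝ → ℝ≥0∞ := fun p =>
    ENNReal.ofReal (gammaPdf α γ p.1) * ENNReal.ofReal (gammaPdf β γ p.2) with hddef
  have hdm : Measurable d :=
    (((measurable_gammaPdf α γ).comp measurable_fst).ennreal_ofReal).mul
      (((measurable_gammaPdf β γ).comp measurable_snd).ennreal_ofReal)
  have hQ : MeasurableSet (Ioi (0:ℝ) ×ˢ Ioi (0:ℝ)) := measurableSet_Ioi.prod measurableSet_Ioi
  have hs : MeasurableSet (Ioo (0:ℝ) 1 ×ˢ Ioi (0:ℝ)) := measurableSet_Ioo.prod measurableSet_Ioi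
  ext A hA
  rw [hμ₁, hμ₂, prod_withDensity _ _ (measurable_gammaPdf α γ).ennreal_ofReal
      (measurable_gammaPdf β γ).ennreal_ofReal, ← Measure.volume_eq_prod,
    Measure.map_apply hf hA, withDensity_apply _ (hf hA), withDensity_apply _ hA]
  have hzero : ∀ p : ℝ × ℝ, p ∉ Ioi (0:ℝ) ×ˢ Ioi (0:ℝ) → d p = 0 := by
    intro p hp
    simp only [Set.mem_prod, mem_Ioi, not_and_or, not_lt] at hp
    rcases hp with hc | hc <;> simp [hddef, gammaPdf, not_lt.2 hc]
  have hind : d = (Ioi (0:ℝ) ×ˢ Ioi (0:ℝ)).indicator d :=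
    (Set.indicator_eq_self.2 fun p hp =>
      by_contra fun hc => (Function.mem_support.1 hp) (hzero p hc)).symm
  calc ∫⁻ p in f ⁻¹' A, d p
      = ∫⁻ p in f ⁻¹' A, (Ioi (0:ℝ) ×ˢ Ioi (0:ℝ)).indicator d p := by rw [← hind]
    _ = ∫⁻ p in Ioi (0:ℝ) ×ˢ Ioi (0:ℝ) ∩ f ⁻¹' A, d p := setLIntegral_indicator hQ d
    _ = ∫⁻ p in Ioi (0:ℝ) ×ˢ Ioi (0:ℝ), (f ⁻¹' A).indicator d p := by
        rw [setLIntegral_indicator (hf hA) d, Set.inter_comm]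
    _ = ∫⁻ p in Tmap '' (Ioo (0:ℝ) 1 ×ˢ Ioi (0:ℝ)), (f ⁻¹' A).indicator d p := by
        rw [Tmap_image]
    _ = ∫⁻ x in Ioo (0:ℝ) 1 ×ˢ Ioi (0:ℝ),
          ENNReal.ofReal |(Tder x).det| * (f ⁻¹' A).indicator d (Tmap x) :=
        lintegral_image_eq_lintegral_abs_det_fderiv_mul volume hs
          (fun x _ => (hasFDerivAt_Tmap x).hasFDerivWithinAt) Tmap_injOn _
    _ = ∫⁻ x in Ioo (0:ℝ) 1 ×ˢ Ioi (0:ℝ),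
          A.indicator (fun _ => (1:ℝ≥0∞)) x.1 *
            ENNReal.ofReal (x.2 * (gammaPdf α γ (x.1 * x.2) * gammaPdf β γ ((1 - x.1) * x.2))) := by
        refine setLIntegral_congr_fun hs ?_
        rintro ⟨t, u⟩ ⟨htm, hum⟩
        obtain ⟨ht0, ht1⟩ := htm
        have hu : (0:ℝ) < u := hum
        have hsum : t * u + (1 - t) * u = u := by ring
        have hfT : f (Tmap (t, u)) = t := by
          simp only [Tmap, hfdef, hsum]
          field_simp
        beta_reduce
        rw [Tder_det, abs_of_pos hu]
        by_cases hmem : t ∈ A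
        · rw [Set.indicator_of_mem, Set.indicator_of_mem hmem]
          · simp only [hddef, Tmap]
            rw [one_mul, ← ENNReal.ofReal_mul (gammaPdf_nonneg hα hγ _),
              ← ENNReal.ofReal_mul hu.le]
          · simp only [Set.mem_preimage, hfT]; exact hmem
        · rw [Set.indicator_of_notMem, Set.indicator_of_notMem hmem]
          · simp
          · simp only [Set.mem_preimage, hfT]; exact hmem
    _ = ∫⁻ t in Ioo (0:ℝ) 1, ∫⁻ u in Ioi (0:ℝ),
          A.indicator (fun _ => (1:ℝ≥0∞)) t *
            ENNReal.ofReal (u * (gammaPdf α γ (t * u) * gammaPdf β γ ((1 - t) * u))) := by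
        rw [Measure.volume_eq_prod, ← Measure.prod_restrict]
        refine lintegral_prod _ (Measurable.aemeasurable ?_)
        refine Measurable.mul ((measurable_const.indicator hA).comp measurable_fst) ?_
        apply Measurable.ennreal_ofReal
        exact measurable_snd.mul
          (((measurable_gammaPdf α γ).comp (measurable_fst.mul measurable_snd)).mul
            ((measurable_gammaPdf β γ).comp
              ((measurable_const.sub measurable_fst).mul measurable_snd)))
    _ = ∫⁻ t in Ioo (0:ℝ) 1, A.indicator (fun t => ENNReal.ofReal (betaPdf α β t)) t := by
        refine setLIntegral_congr_fun measurableSet_Ioo fun t ht => ?_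
        rw [lintegral_const_mul' _ _ (by by_cases hmem : t ∈ A <;> simp [hmem]),
          inner_integral α β γ hα hβ hγ ht]
        by_cases hmem : t ∈ A <;> simp [hmem]
    _ = ∫⁻ t in A ∩ Ioo (0:ℝ) 1, ENNReal.ofReal (betaPdf α β t) := setLIntegral_indicator hA _
    _ = ∫⁻ t in A, (Ioo (0:ℝ) 1).indicator (fun t => ENNReal.ofReal (betaPdf α β t)) t := by
        rw [setLIntegral_indicator measurableSet_Ioo, Set.inter_comm]
    _ = ∫⁻ t in A, ENNReal.ofReal (betaPdf α β t) := by
        refine setLIntegral_congr_fun hA fun t _ => ?_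
        by_cases hmem : t ∈ Ioo (0:ℝ) 1
        · rw [Set.indicator_of_mem hmem]
        · rw [Set.indicator_of_notMem hmem, betaPdf,
            if_neg (by simpa [Set.mem_Ioo] using hmem), ENNReal.ofReal_zero]
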